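/- arXiv:1707.03438 — 3 statements merged into one kernel-verified Lean document; each statement's English description precedes it below -/
import Mathlib

section
/- Let R be the quotient of the polynomial ring (ℤ/2)[u, a, τ_0, τ_1, τ_2, …] by the ideal generated by τ_i² − τ_{i+1}·a for all i ≥ 0. Then for every natural number n, the identity (u + τ_0·a)^{2^n} = u^{2^n} + τ_n · a^{2^{n+1} − 1} holds in R. -/
noncomputable section

open MvPolynomial

/-- The polynomial ring `(ℤ/2)[u, a, τ₀, τ₁, τ₂, …]`:
`Sum.inr false ↦ u`, `Sum.inr true ↦ a`, `Sum.inl i ↦ τᵢ`. -/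
abbrev LambdaPoly : Type := MvPolynomial (ℕ ⊕ Bool) (ZMod 2)

/-- The variable `u` (the class `u_σ`). -/
def uP : LambdaPoly := X (Sum.inr false)

/-- The variable `a` (the class `a_σ`). -/
def aP : LambdaPoly := X (Sum.inr true)

/-- The variable `τᵢ`. -/
def tauP (i : ℕ) : LambdaPoly := X (Sum.inl i)

/-- The ideal generated by the relations `τᵢ² = τ_{i+1} a`. -/
def tauRel : Ideal LambdaPoly :=
  Ideal.span {x | ∃ i : ℕ, x = tauP i ^ 2 - tauP (i + 1) * aP}

/-- The ring `R = (ℤ/2)[u, a, τ₀, τ₁, …]/(τᵢ² = τ_{i+1} a)`, modeling the nonnegative cone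
of `Λ^m_⋆`. -/
abbrev LambdaRing : Type := LambdaPoly ⧸ tauRel

/-- The quotient map onto `R`. -/
def toLambdaRing : LambdaPoly →+* LambdaRing := Ideal.Quotient.mk tauRel

/-- In `R = (ℤ/2)[u, a, τᵢ]/(τᵢ² = τ_{i+1} a)`, the right unit computation
`(u + τ₀ a)^(2ⁿ) = u^(2ⁿ) + τₙ a^(2^(n+1) - 1)` (proof of Proposition 4.3). -/
theorem right_unit_u_pow_two_pow (n : ℕ) :
    (toLambdaRing uP + toLambdaRing (tauP 0) * toLambdaRing aP) ^ (2 ^ n) =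
      toLambdaRing uP ^ (2 ^ n) +
        toLambdaRing (tauP n) * toLambdaRing aP ^ (2 ^ (n + 1) - 1) := by
  have hp : (2 : LambdaPoly) = 0 := by
    have hc : (C (2 : ZMod 2) : LambdaPoly) = 2 := map_ofNat C 2
    have : (2 : ZMod 2) = 0 := by decide
    rw [this] at hc
    simpa using hc.symm
  have h2 : (2 : LambdaRing) = 0 := by
    have : (2 : LambdaRing) = toLambdaRing 2 := (map_ofNat toLambdaRing 2).symm
    rw [this, hp, map_zero]
  have hsq : ∀ x y : LambdaRing, (x + y) ^ 2 = x ^ 2 + y ^ 2 := by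
    intro x y
    have : (x + y) ^ 2 = x ^ 2 + 2 * (x * y) + y ^ 2 := by ring
    rw [this, h2]; ring
  have hrel : ∀ i : ℕ, toLambdaRing (tauP i) ^ 2 =
      toLambdaRing (tauP (i + 1)) * toLambdaRing aP := by
    intro i
    have hmem : (tauP i ^ 2 - tauP (i + 1) * aP) ∈ tauRel :=
      Ideal.subset_span ⟨i, rfl⟩
    have := (Ideal.Quotient.eq_zero_iff_mem).2 hmem
    have h' : toLambdaRing (tauP i ^ 2 - tauP (i + 1) * aP) = 0 := this
    rw [map_sub, map_mul, map_pow, sub_eq_zero] at h'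
    exact h'
  induction n with
  | zero => simp
  | succ n ih =>
    have hpow : (2 : ℕ) ^ (n + 1) = 2 ^ n * 2 := by ring
    rw [hpow, pow_mul, ih, hsq, ← pow_mul, ← hpow, mul_pow, hrel, ← pow_mul]
    have hone : (1 : ℕ) ≤ 2 ^ (n + 1) := Nat.one_le_two_pow
    have he : (2 ^ (n + 1) - 1) * 2 + 1 = 2 ^ (n + 1 + 1) - 1 := by
      have : (2 : ℕ) ^ (n + 1 + 1) = 2 ^ (n + 1) * 2 := by ring
      omega
    rw [mul_assoc, ← pow_succ']
    rw [he]

end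
end

section
/- Let R be the quotient of the polynomial ring (ℤ/2)[u, a, τ_0, τ_1, τ_2, …] by the ideal generated by τ_i² − τ_{i+1}·a for all i ≥ 0. Then for all natural numbers i ≥ 1 and j ≥ 0, the element (τ_{i−1} · (u + τ_0·a)^{2^{i−1} − 1})^{2^j} − τ_{i+j−1} · u^{2^{i+j−1} − 2^j} · a^{2^j − 1} of R lies in the principal ideal of R generated by a^{2^j}. -/
/-!
`R` is a nonzero `𝔽₂`-algebra (every relation has zero constant term), so `x ↦ x ^ 2 ^ j` is
additive and `(u + τ₀ a) ^ 2 ^ j = u ^ 2 ^ j + τ₀ ^ 2 ^ j a ^ 2 ^ j ≡ u ^ 2 ^ j` mod `a ^ 2 ^ j`.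
Iterating `τₖ² = τₖ₊₁ a` gives `τ_{i-1} ^ 2 ^ j = τ_{i+j-1} a ^ (2 ^ j - 1)`, and the product
of the two congruences is the claim.
-/

noncomputable section

open MvPolynomial

set_option synthInstance.maxHeartbeats 1000000 in
set_option maxHeartbeats 1000000 in

theorem pow_two_pow_eq_of_sq_eq_mul {M : Type*} [CommMonoid M] (x : ℕ → M) (a : M)
    (hx : ∀ k, x k ^ 2 = x (k + 1) * a) (k m : ℕ) :
    x k ^ 2 ^ m = x (k + m) * a ^ (2 ^ m - 1) := by
  induction m with
  | zero => simp
  | succ m ih =>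
    have hm : 2 ^ (m + 1) - 1 = 1 + (2 ^ m - 1) * 2 := by
      have := Nat.one_le_two_pow (n := m)
      rw [pow_succ]; omega
    rw [hm, pow_succ, pow_mul, ih, mul_pow, hx, ← add_assoc, pow_add, pow_one, pow_mul, mul_assoc]

theorem toLambdaRing_tauP_sq (k : ℕ) :
    toLambdaRing (tauP k) ^ 2 = toLambdaRing (tauP (k + 1)) * toLambdaRing aP := by
  rw [← map_pow, ← map_mul, toLambdaRing, Ideal.Quotient.eq]
  exact Ideal.subset_span ⟨k, rfl⟩

theorem tauRel_le_ker_constantCoeff : tauRel ≤ RingHom.ker constantCoeff := by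
  rw [tauRel, Ideal.span_le]
  rintro _ ⟨k, rfl⟩
  simp [tauP, aP]

theorem tauRel_ne_top : tauRel ≠ ⊤ := fun h => by
  have h1 : (1 : LambdaPoly) ∈ RingHom.ker constantCoeff :=
    tauRel_le_ker_constantCoeff (h ▸ Submodule.mem_top)
  rw [RingHom.mem_ker, map_one] at h1
  exact one_ne_zero h1

instance : Nontrivial LambdaRing := Ideal.Quotient.nontrivial_iff.mpr tauRel_ne_top

instance : CharP LambdaRing 2 :=
  charP_of_injective_algebraMap (algebraMap (ZMod 2) LambdaRing).injective 2

theorem dvd_add_mul_pow_sub_pow {R : Type*} [CommRing R] (x y c : R) (n : ℕ) :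
    c ∣ (x + y * c) ^ n - x ^ n :=
  (dvd_mul_left c y).trans <| by simpa using sub_dvd_pow_sub_pow (x + y * c) x n

/-- Theorem 5.1 of the paper: in `R = (ℤ/2)[u, a, τᵢ]/(τᵢ² = τ_{i+1} a)`, for `i ≥ 1` and
`j ≥ 0`, the image of `ζᵢ^(2ʲ)`, namely `(τ_{i-1} (u + τ₀ a)^(2^(i-1) - 1))^(2ʲ)`, agrees
with `τ_{i+j-1} · u^(2^(i+j-1) - 2ʲ) · a^(2ʲ - 1)` modulo higher powers of `a`, i.e. modulo
the principal ideal generated by `a^(2ʲ)`. -/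
theorem zeta_pow_image_mod_higher_a (i j : ℕ) (hi : 1 ≤ i) :
    (toLambdaRing (tauP (i - 1)) *
          (toLambdaRing uP + toLambdaRing (tauP 0) * toLambdaRing aP) ^ (2 ^ (i - 1) - 1)) ^
        (2 ^ j) -
      toLambdaRing (tauP (i + j - 1)) * toLambdaRing uP ^ (2 ^ (i + j - 1) - 2 ^ j) *
        toLambdaRing aP ^ (2 ^ j - 1) ∈
    Ideal.span {toLambdaRing aP ^ (2 ^ j)} := by
  obtain ⟨k, rfl⟩ : ∃ k, i = k + 1 := ⟨i - 1, by omega⟩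
  rw [Nat.add_sub_cancel, show k + 1 + j - 1 = k + j by omega, Ideal.mem_span_singleton]
  set u := toLambdaRing uP
  set a := toLambdaRing aP
  set t := toLambdaRing (tauP 0)
  set N := 2 ^ k - 1
  have hτ : toLambdaRing (tauP k) ^ 2 ^ j = toLambdaRing (tauP (k + j)) * a ^ (2 ^ j - 1) :=
    pow_two_pow_eq_of_sq_eq_mul (fun n => toLambdaRing (tauP n)) a toLambdaRing_tauP_sq k j
  have hfrob : ((u + t * a) ^ N) ^ 2 ^ j = (u ^ 2 ^ j + t ^ 2 ^ j * a ^ 2 ^ j) ^ N := by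
    rw [← pow_mul, mul_comm N, pow_mul, add_pow_char_pow, mul_pow]
  have hexp : 2 ^ (k + j) - 2 ^ j = 2 ^ j * N := by
    rw [Nat.mul_sub, mul_one, pow_add, mul_comm]
  rw [mul_pow, hτ, hfrob, hexp, pow_mul]
  convert (dvd_add_mul_pow_sub_pow (u ^ 2 ^ j) (t ^ 2 ^ j) (a ^ 2 ^ j) N).mul_left
    (toLambdaRing (tauP (k + j)) * a ^ (2 ^ j - 1)) using 1
  ring

end
end

section
/- Let R be the quotient of the polynomial ring (ℤ/2)[u, a, τ_0, τ_1, τ_2, …] by the ideal generated by τ_i² − τ_{i+1}·a for all i ≥ 0, and let R_u be the localization of R away from (the image of) u. Then for every natural number n, the element (u + τ_0·a)^{2^n} · (u^{−2^n} + τ_n · u^{−2^{n+1}} · a^{2^{n+1} − 1}) − 1 of R_u lies in the ideal of R_u generated by a^{2^{n+1}}. -/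
set_option synthInstance.maxHeartbeats 1000000
set_option maxHeartbeats 2000000

noncomputable section

open MvPolynomial

/-- The localization `R[u⁻¹]` of `R` away from the image of `u`. -/
abbrev LambdaRingLoc : Type := Localization.Away (toLambdaRing uP)

/-- The canonical map `R → R[u⁻¹]`. -/
def toLoc : LambdaRing →+* LambdaRingLoc := algebraMap LambdaRing LambdaRingLoc

/-- The inverse `u⁻¹` of the image of `u` in `R[u⁻¹]`. -/
def uInv : LambdaRingLoc :=
  Localization.mk 1 ⟨toLambdaRing uP, Submonoid.mem_powers _⟩

lemma isRightCancelAdd_of_addGroup (G : Type) [AddGroup G] : IsRightCancelAdd G :=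
  inferInstance

instance : IsRightCancelAdd LambdaRingLoc := isRightCancelAdd_of_addGroup _

lemma hUV : toLoc (toLambdaRing uP) * uInv = 1 := by
  rw [uInv, toLoc, ← Localization.mk_one_eq_algebraMap, Localization.mk_mul, mul_one, one_mul]
  exact Localization.mk_self (⟨toLambdaRing uP, Submonoid.mem_powers _⟩ :
    Submonoid.powers (toLambdaRing uP))

lemma h2loc : (2 : LambdaRingLoc) = 0 := by
  have h1 : (2 : LambdaPoly) = 0 := by
    have : ((2:ℕ):LambdaPoly) = 0 := CharP.cast_eq_zero _ 2
    simpa using this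
  calc (2 : LambdaRingLoc) = toLoc (toLambdaRing (2 : LambdaPoly)) := by
        rw [map_ofNat, map_ofNat]
    _ = 0 := by rw [h1, map_zero, map_zero]

lemma tau_sq (i : ℕ) :
    toLambdaRing (tauP i) ^ 2 = toLambdaRing (tauP (i+1)) * toLambdaRing aP := by
  rw [toLambdaRing, ← map_pow, ← map_mul, Ideal.Quotient.eq]
  exact Ideal.subset_span ⟨i, rfl⟩

lemma tau0_pow (n : ℕ) :
    toLambdaRing (tauP 0) ^ (2 ^ n) = toLambdaRing (tauP n) * toLambdaRing aP ^ (2 ^ n - 1) := by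
  induction n with
  | zero => simp
  | succ n ih =>
    obtain ⟨k, hk⟩ : ∃ k, 2 ^ n = k + 1 :=
      ⟨2 ^ n - 1, by have := Nat.one_le_two_pow (n := n); omega⟩
    rw [show 2 ^ (n+1) = 2 ^ n * 2 from by ring, pow_mul, ih, mul_pow, tau_sq, ← pow_mul,
      hk, show (k+1) - 1 = k from by omega, show (k+1) * 2 - 1 = k * 2 + 1 from by omega,
      mul_assoc, ← pow_succ']

/-- From the proof of Proposition 4.6: in `R[u⁻¹]`, one has
`(u + τ₀ a)^(2ⁿ) · (u^(-2ⁿ) + τₙ u^(-2^(n+1)) a^(2^(n+1) - 1)) ≡ 1` modulo the ideal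
generated by `a^(2^(n+1))`; this expresses
`η_R(u^(-2ⁿ)) ≡ u^(-2ⁿ) + τₙ u^(-2^(n+1)) a^(2^(n+1) - 1)` modulo higher powers of `a`. -/
theorem right_unit_u_neg_pow_two_pow (n : ℕ) :
    toLoc ((toLambdaRing uP + toLambdaRing (tauP 0) * toLambdaRing aP) ^ (2 ^ n)) *
        (uInv ^ (2 ^ n) +
          toLoc (toLambdaRing (tauP n)) * uInv ^ (2 ^ (n + 1)) *
            toLoc (toLambdaRing aP) ^ (2 ^ (n + 1) - 1)) - 1 ∈
      Ideal.span {toLoc (toLambdaRing aP) ^ (2 ^ (n + 1))} := by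
  set U := toLoc (toLambdaRing uP) with hU
  set A := toLoc (toLambdaRing aP) with hA
  set V := uInv with hV
  set Tn := toLoc (toLambdaRing (tauP n)) with hTn
  set Tn1 := toLoc (toLambdaRing (tauP (n+1))) with hTn1
  obtain ⟨j, hj⟩ : ∃ j, 2 ^ n = j + 1 :=
    ⟨2 ^ n - 1, by have := Nat.one_le_two_pow (n := n); omega⟩
  have he2 : 2 ^ (n+1) - 1 = 2*j + 1 := by rw [pow_succ]; omega
  have he1 : 2 ^ (n+1) = 2*j + 2 := by rw [pow_succ]; omega
  have hpoly : (uP + tauP 0 * aP) ^ (2 ^ n) = uP ^ (2^n) + (tauP 0 * aP) ^ (2^n) :=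
    add_pow_char_pow uP (tauP 0 * aP) 2 n
  have hR : toLambdaRing ((uP + tauP 0 * aP) ^ (2^n))
      = toLambdaRing uP ^ (j+1) + toLambdaRing (tauP n) * toLambdaRing aP ^ (2*j+1) := by
    rw [hpoly, mul_pow, map_add, map_pow, map_mul, map_pow, map_pow, tau0_pow, hj,
      show (j+1) - 1 = j from by omega, mul_assoc, ← pow_add,
      show j + (j+1) = 2*j+1 from by omega]
  have hmap : toLoc ((toLambdaRing uP + toLambdaRing (tauP 0) * toLambdaRing aP) ^ (2 ^ n))
      = U ^ (j+1) + Tn * A ^ (2*j+1) := by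
    rw [← map_mul toLambdaRing, ← map_add toLambdaRing, ← map_pow toLambdaRing, hR,
      map_add, map_pow, map_mul, map_pow]
  rw [hmap, hj, he2, he1]
  refine Ideal.mem_span_singleton'.mpr ⟨Tn1 * V ^ (2*j+2) * A ^ (2*j+1), ?_⟩
  rw [eq_comm]
  have hUVpow : U ^ (j+1) * V ^ (j+1) = 1 := by rw [← mul_pow, hUV, one_pow]
  have hT : Tn ^ 2 = Tn1 * A := by rw [hTn, hTn1, hA, ← map_pow, ← map_mul, tau_sq]
  have h2 : (2 : LambdaRingLoc) = 0 := h2loc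
  linear_combination (1 + Tn * V^(j+1) * A^(2*j+1)) * hUVpow + (V^(2*j+2) * A^(4*j+2)) * hT
    + (Tn * V^(j+1) * A^(2*j+1)) * h2

end
end
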